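/- Let T be a bounded totally paranormal operator and μ an isolated point of σ(T). Then the kernel of the Riesz projection E_μ equals the range of T − μI; in particular ran(T − μI) is closed. -/

import Mathlib

open Metric Filter Topology Complex Real

/-!
Put `A = T - μ` and `E = (2πi)⁻¹ ∮ R(z) dz` over `|z - μ| = r`. Since `A R(z) = (z - μ) R(z) - 1`,
`Aⁿ E = (2πi)⁻¹ ∮ (z - μ)ⁿ R(z) dz`, and shrinking the contour to any radius `ε ≤ r` gives
`‖Aⁿ E‖ = O(εⁿ)`: `A` is quasinilpotent on the range of `E`. Iterating paranormality yields
`‖A x‖ⁿ⁺¹ ≤ ‖Aⁿ⁺¹ x‖ ‖x‖ⁿ`, which forces `A E = 0`, hence also `E A = 0` as `E` commutes with `T`.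
Conversely `S = (2πi)⁻¹ ∮ (z - μ)⁻¹ R(z) dz` satisfies `A S = E - 1`, so every `x` with `E x = 0`
equals `A (-S x)`. Thus `ker E = ran A`, and kernels of bounded operators are closed.
-/

theorem le_of_forall_pow_succ_le_mul_pow {b c K : ℝ} (hc : 0 ≤ c)
    (h : ∀ n : ℕ, b ^ (n + 1) ≤ K * c ^ n) : b ≤ c := by
  by_contra! hcb
  have hb : 0 < b := hc.trans_lt hcb
  have hbound : ∀ n : ℕ, b ≤ K * (c / b) ^ n := fun n => by
    rw [div_pow, mul_div_assoc', le_div_iff₀ (pow_pos hb n), ← pow_succ']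
    exact h n
  have hlim : Tendsto (fun n : ℕ => K * (c / b) ^ n) atTop (𝓝 0) := by
    simpa using (tendsto_pow_atTop_nhds_zero_of_lt_one (div_nonneg hc hb.le)
      ((div_lt_one hb).mpr hcb)).const_mul K
  exact hb.not_ge (ge_of_tendsto' hlim hbound)

/- Log-convexity: `a 1 / a 0 ≤ a (k + 1) / a k` for every `k`; `step` states this
cross-multiplied, so that vanishing terms need no division. -/
theorem pow_succ_le_mul_pow_of_sq_le_mul {a : ℕ → ℝ} (ha : ∀ k, 0 ≤ a k)
    (h : ∀ k, a (k + 1) ^ 2 ≤ a (k + 2) * a k) (n : ℕ) :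
    a 1 ^ (n + 1) ≤ a (n + 1) * a 0 ^ n := by
  have step : ∀ n, a 1 * a (n + 1) ≤ a (n + 2) * a 0 := by
    intro n
    induction n with
    | zero => simpa [sq] using h 0
    | succ n ih =>
      rcases (ha (n + 2)).eq_or_lt with hz | hpos
      · rw [← hz, mul_zero]
        exact mul_nonneg (ha _) (ha _)
      · refine le_of_mul_le_mul_right ?_ hpos
        calc a 1 * a (n + 2) * a (n + 2) = a 1 * a (n + 2) ^ 2 := by ring
          _ ≤ a 1 * (a (n + 3) * a (n + 1)) := mul_le_mul_of_nonneg_left (h (n + 1)) (ha 1)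
          _ = a (n + 3) * (a 1 * a (n + 1)) := by ring
          _ ≤ a (n + 3) * (a (n + 2) * a 0) := mul_le_mul_of_nonneg_left ih (ha _)
          _ = a (n + 3) * a 0 * a (n + 2) := by ring
  induction n with
  | zero => simp
  | succ n ih =>
    calc a 1 ^ (n + 2) = a 1 * a 1 ^ (n + 1) := by ring
      _ ≤ a 1 * (a (n + 1) * a 0 ^ n) := mul_le_mul_of_nonneg_left ih (ha 1)
      _ = a 1 * a (n + 1) * a 0 ^ n := by ring
      _ ≤ a (n + 2) * a 0 * a 0 ^ n := mul_le_mul_of_nonneg_right (step n) (pow_nonneg (ha 0) n)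
      _ = a (n + 2) * a 0 ^ (n + 1) := by ring

theorem sphere_subset_closedBall_diff_singleton {X : Type*} [PseudoMetricSpace X] {x : X}
    {ε r : ℝ} (hε : 0 < ε) (hεr : ε ≤ r) : sphere x ε ⊆ closedBall x r \ {x} :=
  fun _ hz =>
    ⟨closedBall_subset_closedBall hεr (sphere_subset_closedBall hz), ne_of_mem_sphere hz hε.ne'⟩

section Resolvent

variable {R A : Type*} [CommRing R] [Ring A] [Algebra R A] {a : A}

theorem commute_resolvent (a : A) (z : R) : Commute a (resolvent a z) := by
  by_cases hz : z ∈ resolventSet R a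
  · rw [spectrum.resolvent_eq hz]
    exact ((Algebra.commute_algebraMap_right z a).sub_right (Commute.refl a)).units_inv_right
  · rw [resolvent, Ring.inverse_non_unit _ hz]
    exact Commute.zero_right a

theorem sub_algebraMap_mul_resolvent {z : R} (hz : z ∈ resolventSet R a) (μ : R) :
    (a - algebraMap R A μ) * resolvent a z = (z - μ) • resolvent a z - 1 := by
  have hsplit : a - algebraMap R A μ = algebraMap R A (z - μ) - (algebraMap R A z - a) := by
    rw [map_sub]
    abel
  rw [hsplit, sub_mul, Algebra.algebraMap_eq_smul_one, smul_one_mul, resolvent,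
    Ring.mul_inverse_cancel _ hz]

end Resolvent

section CircleIntegral

variable {E F : Type*} [NormedAddCommGroup E] [NormedSpace ℂ E] [CompleteSpace E]
  [NormedAddCommGroup F] [NormedSpace ℂ F] [CompleteSpace F]

theorem ContinuousLinearMap.circleIntegral_comp_comm (L : E →L[ℂ] F) {f : ℂ → E} {c : ℂ}
    {R : ℝ} (hf : CircleIntegrable f c R) :
    ∮ z in C(c, R), L (f z) = L (∮ z in C(c, R), f z) := by
  simp only [circleIntegral, ← L.map_smul]
  exact L.intervalIntegral_comp_comm hf.out

end CircleIntegral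

section BanachAlgebra

variable {𝒜 : Type*} [NormedRing 𝒜] [NormedAlgebra ℂ 𝒜] [CompleteSpace 𝒜]

theorem mul_circleIntegral {f : ℂ → 𝒜} {c : ℂ} {R : ℝ} (hf : CircleIntegrable f c R) (b : 𝒜) :
    b * ∮ z in C(c, R), f z = ∮ z in C(c, R), b * f z :=
  ((ContinuousLinearMap.mul ℂ 𝒜 b).circleIntegral_comp_comm hf).symm

theorem circleIntegral_mul {f : ℂ → 𝒜} {c : ℂ} {R : ℝ} (hf : CircleIntegrable f c R) (b : 𝒜) :
    (∮ z in C(c, R), f z) * b = ∮ z in C(c, R), f z * b :=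
  (((ContinuousLinearMap.mul ℂ 𝒜).flip b).circleIntegral_comp_comm hf).symm

theorem Commute.circleIntegral_right {b : 𝒜} {f : ℂ → 𝒜} {c : ℂ} {R : ℝ} (hR : 0 ≤ R)
    (hf : CircleIntegrable f c R) (h : ∀ z ∈ sphere c R, Commute b (f z)) :
    Commute b (∮ z in C(c, R), f z) := by
  rw [commute_iff_eq, mul_circleIntegral hf, circleIntegral_mul hf]
  exact circleIntegral.integral_congr hR fun z hz => (h z hz).eq

variable {a : 𝒜} {μ : ℂ} {ε r : ℝ}

theorem differentiableOn_resolvent (a : 𝒜) :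
    DifferentiableOn ℂ (resolvent a) (resolventSet ℂ a) :=
  fun _ hz => (spectrum.hasDerivAt_resolvent_const_left hz).differentiableAt.differentiableWithinAt

theorem sub_algebraMap_mul_circleIntegral_smul_resolvent (hε : 0 ≤ ε)
    (hs : sphere μ ε ⊆ resolventSet ℂ a) {f : ℂ → ℂ} (hf : ContinuousOn f (sphere μ ε)) :
    (a - algebraMap ℂ 𝒜 μ) * ∮ z in C(μ, ε), f z • resolvent a z =
      (∮ z in C(μ, ε), ((z - μ) * f z) • resolvent a z) - (∮ z in C(μ, ε), f z) • 1 := by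
  have hR : ContinuousOn (resolvent a) (sphere μ ε) :=
    (differentiableOn_resolvent a).continuousOn.mono hs
  have hzf : ContinuousOn (fun z => (z - μ) * f z) (sphere μ ε) :=
    (continuousOn_id.sub continuousOn_const).mul hf
  have hint {g : ℂ → ℂ} (hg : ContinuousOn g (sphere μ ε)) :
      CircleIntegrable (fun z => g z • resolvent a z) μ ε :=
    (hg.smul hR).circleIntegrable hε
  have hint_one : CircleIntegrable (fun z => f z • (1 : 𝒜)) μ ε :=
    (hf.smul continuousOn_const).circleIntegrable hε
  rw [mul_circleIntegral (hint hf), ← circleIntegral.integral_smul_const,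
    ← circleIntegral.integral_sub (hint hzf) hint_one]
  refine circleIntegral.integral_congr hε fun z hz => ?_
  simp only [mul_smul_comm, sub_algebraMap_mul_resolvent (hs hz), smul_sub, smul_smul, mul_comm]

theorem sub_algebraMap_pow_mul_circleIntegral_resolvent (hε : 0 ≤ ε)
    (hs : sphere μ ε ⊆ resolventSet ℂ a) (n : ℕ) :
    (a - algebraMap ℂ 𝒜 μ) ^ n * ∮ z in C(μ, ε), resolvent a z =
      ∮ z in C(μ, ε), (z - μ) ^ n • resolvent a z := by
  induction n with
  | zero => simp
  | succ n ih =>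
    have hpow : ContinuousOn (fun z : ℂ => (z - μ) ^ n) (sphere μ ε) := by fun_prop
    have hzero : (∮ z in C(μ, ε), (z - μ) ^ n) = 0 := by
      simpa using circleIntegral.integral_sub_zpow_of_ne (n := n) (by omega) μ μ ε
    rw [pow_succ', mul_assoc, ih, sub_algebraMap_mul_circleIntegral_smul_resolvent hε hs hpow,
      hzero, zero_smul, sub_zero]
    simp only [← pow_succ']

theorem circleIntegral_pow_smul_resolvent_eq_of_le (hε : 0 < ε) (hεr : ε ≤ r)
    (hres : closedBall μ r \ {μ} ⊆ resolventSet ℂ a) (n : ℕ) :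
    ∮ z in C(μ, r), (z - μ) ^ n • resolvent a z =
      ∮ z in C(μ, ε), (z - μ) ^ n • resolvent a z := by
  have hd : DifferentiableOn ℂ (fun z => (z - μ) ^ n • resolvent a z) (resolventSet ℂ a) :=
    (by fun_prop : DifferentiableOn ℂ (fun z : ℂ => (z - μ) ^ n) _).smul
      (differentiableOn_resolvent a)
  refine Complex.circleIntegral_eq_of_differentiable_on_annulus_off_countable hε hεr
    Set.countable_empty (hd.continuousOn.mono (subset_trans ?_ hres)) fun z hz =>
      hd.differentiableAt ((spectrum.isOpen_resolventSet a).mem_nhds (hres ?_))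
  · exact Set.sdiff_subset_sdiff_right (by simpa using hε)
  · exact ⟨ball_subset_closedBall hz.1.1, fun h => hz.1.2 (h ▸ mem_closedBall_self hε.le)⟩

theorem exists_norm_circleIntegral_pow_smul_resolvent_le (hε : 0 ≤ ε)
    (hs : sphere μ ε ⊆ resolventSet ℂ a) :
    ∃ C, ∀ n : ℕ, ‖∮ z in C(μ, ε), (z - μ) ^ n • resolvent a z‖ ≤ C * ε ^ n := by
  obtain ⟨B, hB⟩ := (isCompact_sphere μ ε).exists_bound_of_continuousOn
    ((differentiableOn_resolvent a).continuousOn.mono hs)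
  refine ⟨2 * π * ε * max B 0, fun n => ?_⟩
  calc ‖∮ z in C(μ, ε), (z - μ) ^ n • resolvent a z‖ ≤ 2 * π * ε * (ε ^ n * max B 0) := by
        refine circleIntegral.norm_integral_le_of_norm_le_const hε fun z hz => ?_
        rw [norm_smul, norm_pow, mem_sphere_iff_norm.mp hz]
        gcongr
        exact (hB z hz).trans (le_max_left _ _)
    _ = 2 * π * ε * max B 0 * ε ^ n := by ring

noncomputable def rieszProjection (a : 𝒜) (μ : ℂ) (r : ℝ) : 𝒜 :=
  (2 * π * I)⁻¹ • ∮ z in C(μ, r), resolvent a z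

theorem commute_rieszProjection (hr : 0 ≤ r) (hs : sphere μ r ⊆ resolventSet ℂ a) :
    Commute a (rieszProjection a μ r) :=
  (Commute.circleIntegral_right hr
    (((differentiableOn_resolvent a).continuousOn.mono hs).circleIntegrable hr)
    fun z _ => commute_resolvent a z).smul_right _

theorem exists_sub_algebraMap_mul_eq_rieszProjection_sub_one (hr : 0 < r)
    (hs : sphere μ r ⊆ resolventSet ℂ a) :
    ∃ s, (a - algebraMap ℂ 𝒜 μ) * s = rieszProjection a μ r - 1 := by
  have hinv : ContinuousOn (fun z => (z - μ)⁻¹) (sphere μ r) :=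
    (continuousOn_id.sub continuousOn_const).inv₀ fun z hz =>
      sub_ne_zero.mpr (ne_of_mem_sphere hz hr.ne')
  refine ⟨(2 * π * I)⁻¹ • ∮ z in C(μ, r), (z - μ)⁻¹ • resolvent a z, ?_⟩
  have hcancel : (∮ z in C(μ, r), ((z - μ) * (z - μ)⁻¹) • resolvent a z) =
      ∮ z in C(μ, r), resolvent a z :=
    circleIntegral.integral_congr hr.le fun z hz => by
      simp only [mul_inv_cancel₀ (sub_ne_zero.mpr (ne_of_mem_sphere hz hr.ne')), one_smul]
  rw [mul_smul_comm, sub_algebraMap_mul_circleIntegral_smul_resolvent hr.le hs hinv, hcancel,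
    circleIntegral.integral_sub_center_inv μ hr.ne', smul_sub, smul_smul,
    inv_mul_cancel₀ (by simp [Real.pi_ne_zero, I_ne_zero]), one_smul, rieszProjection]

theorem eventually_norm_sub_algebraMap_pow_mul_rieszProjection_le (hr : 0 < r)
    (hres : closedBall μ r \ {μ} ⊆ resolventSet ℂ a) :
    ∀ᶠ ε in 𝓝[>] 0, ∃ C, ∀ n : ℕ,
      ‖(a - algebraMap ℂ 𝒜 μ) ^ n * rieszProjection a μ r‖ ≤ C * ε ^ n := by
  filter_upwards [Ioc_mem_nhdsGT hr] with ε ⟨hε, hεr⟩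
  have hsε := (sphere_subset_closedBall_diff_singleton hε hεr).trans hres
  have hsr := (sphere_subset_closedBall_diff_singleton hr le_rfl).trans hres
  obtain ⟨C, hC⟩ := exists_norm_circleIntegral_pow_smul_resolvent_le hε.le hsε
  refine ⟨‖(2 * π * I)⁻¹‖ * C, fun n => ?_⟩
  rw [rieszProjection, mul_smul_comm, sub_algebraMap_pow_mul_circleIntegral_resolvent hr.le hsr,
    circleIntegral_pow_smul_resolvent_eq_of_le hε hεr hres, norm_smul]
  calc _ ≤ ‖(2 * π * I)⁻¹‖ * (C * ε ^ n) := by gcongr; exact hC n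
    _ = _ := (mul_assoc _ _ _).symm

end BanachAlgebra

section Paranormal

variable {𝕜 X : Type*} [NontriviallyNormedField 𝕜] [NormedAddCommGroup X] [NormedSpace 𝕜 X]

def IsParanormal (A : X →L[𝕜] X) : Prop :=
  ∀ x, ‖A x‖ ^ 2 ≤ ‖A (A x)‖ * ‖x‖

variable {A : X →L[𝕜] X}

theorem IsParanormal.norm_apply_pow_le (hA : IsParanormal A) (x : X) (n : ℕ) :
    ‖A x‖ ^ (n + 1) ≤ ‖(A ^ (n + 1)) x‖ * ‖x‖ ^ n := by
  simpa using pow_succ_le_mul_pow_of_sq_le_mul (a := fun k => ‖(A ^ k) x‖)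
    (fun _ => norm_nonneg _) (fun k => by simpa [pow_succ'] using hA ((A ^ k) x)) n

theorem IsParanormal.mul_eq_zero (hA : IsParanormal A) {P : X →L[𝕜] X}
    (hP : ∀ᶠ ε in 𝓝[>] 0, ∃ C, ∀ n : ℕ, ‖A ^ n * P‖ ≤ C * ε ^ n) : A * P = 0 := by
  ext x
  have hle : ∀ᶠ ε in 𝓝[>] 0, ‖A (P x)‖ ≤ ε * ‖P x‖ := by
    filter_upwards [hP, self_mem_nhdsWithin] with ε ⟨C, hC⟩ (hε : 0 < ε)
    refine le_of_forall_pow_succ_le_mul_pow (K := C * ε * ‖x‖) (by positivity) fun n => ?_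
    calc ‖A (P x)‖ ^ (n + 1) ≤ ‖(A ^ (n + 1) * P) x‖ * ‖P x‖ ^ n :=
          hA.norm_apply_pow_le (P x) n
      _ ≤ C * ε ^ (n + 1) * ‖x‖ * ‖P x‖ ^ n := by
        gcongr
        exact ((A ^ (n + 1) * P).le_opNorm x).trans (by gcongr; exact hC _)
      _ = C * ε * ‖x‖ * (ε * ‖P x‖) ^ n := by ring
  have hlim : Tendsto (fun ε : ℝ => ε * ‖P x‖) (𝓝[>] 0) (𝓝 0) := by
    have := (tendsto_id (x := 𝓝 (0 : ℝ))).mul_const ‖P x‖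
    rw [zero_mul] at this
    exact this.mono_left nhdsWithin_le_nhds
  simpa using ge_of_tendsto hlim hle

end Paranormal

theorem ContinuousLinearMap.ker_eq_range_of_mul_eq_zero_of_mul_eq_sub_one {R M : Type*}
    [Ring R] [TopologicalSpace M] [AddCommGroup M] [IsTopologicalAddGroup M] [Module R M]
    {E A S : M →L[R] M} (hEA : E * A = 0) (hAS : A * S = E - 1) :
    LinearMap.ker (E : M →ₗ[R] M) = LinearMap.range (A : M →ₗ[R] M) := by
  ext x
  refine ⟨fun hx => ⟨-S x, ?_⟩, fun ⟨y, hy⟩ => ?_⟩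
  · have hASx : A (S x) = E x - x := congrArg (· x) hAS
    have hEx : E x = 0 := hx
    simp [hASx, hEx]
  · simpa [← hy] using congrArg (· y) hEA

theorem stmt_11_general {H : Type*} [NormedAddCommGroup H] [InnerProductSpace ℂ H]
    [CompleteSpace H] (T : H →L[ℂ] H)
    (hT : ∀ (lam : ℂ) (x : H),
      ‖(T - lam • 1) x‖ ^ 2 ≤ ‖((T - lam • 1) ∘L (T - lam • 1)) x‖ * ‖x‖)
    (μ : ℂ)
    (r : ℝ) (hr : 0 < r)
    (hsep : Metric.closedBall μ r ∩ spectrum ℂ T = {μ})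
    (E : H →L[ℂ] H)
    (hE : E = ((2 * Real.pi * Complex.I)⁻¹ : ℂ) •
      (∮ z in C(μ, r), Ring.inverse (z • (1 : H →L[ℂ] H) - T))) :
    LinearMap.ker (E : H →ₗ[ℂ] H) = LinearMap.range ((T - μ • 1 : H →L[ℂ] H) : H →ₗ[ℂ] H) ∧
      IsClosed ((LinearMap.range ((T - μ • 1 : H →L[ℂ] H) : H →ₗ[ℂ] H) : Submodule ℂ H) : Set H) := by
  have hE' : E = rieszProjection T μ r := by
    simp only [hE, rieszProjection, resolvent, Algebra.algebraMap_eq_smul_one]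
  have hA : T - μ • 1 = T - algebraMap ℂ (H →L[ℂ] H) μ := by
    rw [Algebra.algebraMap_eq_smul_one]
  have hres : closedBall μ r \ {μ} ⊆ resolventSet ℂ T :=
    fun z hz => by_contra fun hzσ => hz.2 (hsep.subset ⟨hz.1, hzσ⟩)
  have hs : sphere μ r ⊆ resolventSet ℂ T :=
    (sphere_subset_closedBall_diff_singleton hr le_rfl).trans hres
  have hpara : IsParanormal (T - μ • 1) := hT μ
  have hAE : (T - μ • 1) * E = 0 := hpara.mul_eq_zero <| by
    simpa only [hA, hE'] using eventually_norm_sub_algebraMap_pow_mul_rieszProjection_le hr hres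
  have hEA : E * (T - μ • 1) = 0 := by
    rw [← hAE, hA, hE']
    exact ((commute_rieszProjection hr.le hs).sub_left
      (Algebra.commute_algebraMap_left μ _)).symm.eq
  obtain ⟨S, hS⟩ := exists_sub_algebraMap_mul_eq_rieszProjection_sub_one hr hs
  have hker := ContinuousLinearMap.ker_eq_range_of_mul_eq_zero_of_mul_eq_sub_one hEA
    (S := S) (by rw [hA, hE', hS])
  exact ⟨hker, hker ▸ E.isClosed_ker⟩

theorem stmt_11 {H : Type*} [NormedAddCommGroup H] [InnerProductSpace ℂ H]
    [CompleteSpace H] (T : H →L[ℂ] H)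
    (hT : ∀ (lam : ℂ) (x : H),
      ‖(T - lam • 1) x‖ ^ 2 ≤ ‖((T - lam • 1) ∘L (T - lam • 1)) x‖ * ‖x‖)
    (μ : ℂ) (hμ : μ ∈ spectrum ℂ T)
    (r : ℝ) (hr : 0 < r)
    (hsep : Metric.closedBall μ r ∩ spectrum ℂ T = {μ})
    (E : H →L[ℂ] H)
    (hE : E = ((2 * Real.pi * Complex.I)⁻¹ : ℂ) •
      (∮ z in C(μ, r), Ring.inverse (z • (1 : H →L[ℂ] H) - T))) :
    LinearMap.ker (E : H →ₗ[ℂ] H) = LinearMap.range ((T - μ • 1 : H →L[ℂ] H) : H →ₗ[ℂ] H) ∧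
      IsClosed ((LinearMap.range ((T - μ • 1 : H →L[ℂ] H) : H →ₗ[ℂ] H) : Submodule ℂ H) : Set H) :=
  stmt_11_general T hT μ r hr hsep E hE
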